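/- arXiv:2602.14126 — 4 statements merged into one kernel-verified Lean document; each statement's English description precedes it below -/
import Mathlib

section
/- For every natural number N, the Hamiltonian matrix H_N = (Q_N² + P_N²)/2 is diagonal, with diagonal entries H_{N;j,j} = j + 1/2 for j = 0, …, N−1 and H_{N;N,N} = N/2, and all off-diagonal entries zero. -/
open Matrix Polynomial

/-- Heisenberg's tridiagonal position matrix `Q_N` of size `(N+1) × (N+1)`:
`Q_{j,k} = (√(k+1)·δ_{j,k+1} + √k·δ_{j,k-1}) / √2`. -/
noncomputable def Qmat (N : ℕ) : Matrix (Fin (N+1)) (Fin (N+1)) ℂ :=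
  Matrix.of fun j k =>
    (((1 / Real.sqrt 2) *
        (Real.sqrt ((k : ℕ) + 1) * (if (j : ℕ) = (k : ℕ) + 1 then 1 else 0) +
         Real.sqrt (k : ℕ) * (if (j : ℕ) + 1 = (k : ℕ) then 1 else 0)) : ℝ) : ℂ)

/-- Heisenberg's tridiagonal momentum matrix `P_N` of size `(N+1) × (N+1)`:
`P_{j,k} = (i/√2)·(√(k+1)·δ_{j,k+1} − √k·δ_{j,k-1})`. -/
noncomputable def Pmat (N : ℕ) : Matrix (Fin (N+1)) (Fin (N+1)) ℂ :=
  Matrix.of fun j k =>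
    (Complex.I / (Real.sqrt 2 : ℂ)) *
      ((Real.sqrt ((k : ℕ) + 1) : ℂ) * (if (j : ℕ) = (k : ℕ) + 1 then 1 else 0) -
       (Real.sqrt (k : ℕ) : ℂ) * (if (j : ℕ) + 1 = (k : ℕ) then 1 else 0))

/-- The action difference `D_N = (Q_N P_N − P_N Q_N)/i`. -/
noncomputable def Dmat (N : ℕ) : Matrix (Fin (N+1)) (Fin (N+1)) ℂ :=
  Complex.I⁻¹ • (Qmat N * Pmat N - Pmat N * Qmat N)

/-!
With the truncated creation matrix `a†` (entries `√(k+1)` just below the diagonal) and its adjoint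
`a`, one has `Q_N = (a† + a)/√2` and `P_N = i(a† − a)/√2`, hence `Q_N² + P_N² = a†a + aa†`. Here
`a†a` is the number operator `diag(0, 1, …, N)`, while `aa† = diag(1, 2, …, N, 0)`: the truncation
kills the last diagonal entry, which is why `H_N` ends in `N/2` instead of `N + 1/2`.
-/

lemma ofReal_sqrt_mul_self {x : ℝ} (hx : 0 ≤ x) : (Real.sqrt x : ℂ) * Real.sqrt x = x := by
  rw [← Complex.ofReal_mul, Real.mul_self_sqrt hx]

noncomputable def creationMat (N : ℕ) : Matrix (Fin (N+1)) (Fin (N+1)) ℂ :=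
  Matrix.of fun j k => if (j : ℕ) = (k : ℕ) + 1 then (Real.sqrt ((k : ℕ) + 1) : ℂ) else 0

lemma conjTranspose_creationMat_apply (N : ℕ) (j k : Fin (N+1)) :
    (creationMat N)ᴴ j k = if (j : ℕ) + 1 = (k : ℕ) then (Real.sqrt (k : ℕ) : ℂ) else 0 := by
  rw [conjTranspose_apply, creationMat, of_apply]
  by_cases h : (j : ℕ) + 1 = k
  · simp [← h]
  · simp [h, Ne.symm h]

lemma creationMat_zero_apply (N : ℕ) (k : Fin (N+1)) : creationMat N 0 k = 0 := by
  simp [creationMat]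

lemma creationMat_apply_last (N : ℕ) (j : Fin (N+1)) : creationMat N j (Fin.last N) = 0 := by
  simp only [creationMat, of_apply, Fin.val_last]
  exact if_neg (by omega)

lemma creationMat_succ_apply (N : ℕ) (i : Fin N) (k : Fin (N+1)) :
    creationMat N i.succ k = if k = i.castSucc then (Real.sqrt ((i : ℕ) + 1) : ℂ) else 0 := by
  rcases eq_or_ne k i.castSucc with rfl | h
  · simp [creationMat]
  · rw [if_neg h]
    exact if_neg (by simpa [Fin.ext_iff, eq_comm] using h)

lemma creationMat_apply_castSucc (N : ℕ) (j : Fin (N+1)) (i : Fin N) :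
    creationMat N j i.castSucc = if j = i.succ then (Real.sqrt ((i : ℕ) + 1) : ℂ) else 0 := by
  simp [creationMat, Fin.ext_iff]

lemma Qmat_eq_smul_creationMat_add_conjTranspose (N : ℕ) :
    Qmat N = (Real.sqrt 2 : ℂ)⁻¹ • (creationMat N + (creationMat N)ᴴ) := by
  ext j k
  rw [Matrix.smul_apply, Matrix.add_apply, conjTranspose_creationMat_apply]
  simp only [Qmat, creationMat, of_apply, smul_eq_mul]
  split_ifs <;> push_cast <;> ring

lemma Pmat_eq_smul_creationMat_sub_conjTranspose (N : ℕ) :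
    Pmat N = (Complex.I / Real.sqrt 2) • (creationMat N - (creationMat N)ᴴ) := by
  ext j k
  rw [Matrix.smul_apply, Matrix.sub_apply, conjTranspose_creationMat_apply]
  simp only [Pmat, creationMat, of_apply, smul_eq_mul]
  split_ifs <;> ring

lemma Qmat_mul_self_add_Pmat_mul_self (N : ℕ) :
    Qmat N * Qmat N + Pmat N * Pmat N =
      creationMat N * (creationMat N)ᴴ + (creationMat N)ᴴ * creationMat N := by
  have hQ : (Real.sqrt 2 : ℂ)⁻¹ * (Real.sqrt 2 : ℂ)⁻¹ = 2⁻¹ := by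
    rw [← mul_inv, ofReal_sqrt_mul_self zero_le_two, Complex.ofReal_ofNat]
  have hP : Complex.I / Real.sqrt 2 * (Complex.I / Real.sqrt 2) = -2⁻¹ := by
    rw [div_mul_div_comm, Complex.I_mul_I, ofReal_sqrt_mul_self zero_le_two,
      Complex.ofReal_ofNat, neg_div, one_div]
  rw [Qmat_eq_smul_creationMat_add_conjTranspose, Pmat_eq_smul_creationMat_sub_conjTranspose,
    smul_mul_smul_comm, smul_mul_smul_comm, hQ, hP]
  simp only [add_mul, mul_add, sub_mul, mul_sub]
  module

lemma creationMat_mul_conjTranspose (N : ℕ) :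
    creationMat N * (creationMat N)ᴴ = diagonal fun k : Fin (N+1) => ((k : ℕ) : ℂ) := by
  ext j k
  induction j using Fin.cases with
  | zero => simp [mul_apply, creationMat_zero_apply, diagonal_apply]
  | succ i =>
    simp only [mul_apply, creationMat_succ_apply, ite_mul, zero_mul, Fintype.sum_ite_eq',
      conjTranspose_apply, creationMat_apply_castSucc, diagonal_apply]
    by_cases h : k = i.succ
    · subst h
      simp only [↓reduceIte, RCLike.star_def, Complex.conj_ofReal, Fin.val_succ, Nat.cast_add,
        Nat.cast_one]
      rw [ofReal_sqrt_mul_self (by positivity)]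
      norm_cast
    · simp [h, Ne.symm h]

lemma conjTranspose_creationMat_mul (N : ℕ) :
    (creationMat N)ᴴ * creationMat N =
      diagonal fun k => if k = Fin.last N then 0 else ((k : ℕ) + 1 : ℂ) := by
  ext j k
  induction k using Fin.lastCases with
  | last => simp +contextual [mul_apply, creationMat_apply_last, diagonal_apply]
  | cast i =>
    simp only [mul_apply, creationMat_apply_castSucc, mul_ite, mul_zero, Fintype.sum_ite_eq',
      conjTranspose_apply, creationMat_succ_apply, diagonal_apply]
    by_cases h : j = i.castSucc
    · subst h
      simp only [↓reduceIte, RCLike.star_def, Complex.conj_ofReal, Fin.castSucc_ne_last,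
        Fin.val_castSucc]
      rw [ofReal_sqrt_mul_self (by positivity)]
      norm_cast
    · simp [h]

/-- The Hamiltonian `H_N = (Q_N² + P_N²)/2` is diagonal, with entries
`j + 1/2` for `j = 0, …, N−1` and `N/2` at position `(N,N)`. -/
theorem hamiltonian_diagonal (N : ℕ) :
    (2 : ℂ)⁻¹ • (Qmat N * Qmat N + Pmat N * Pmat N) =
      Matrix.diagonal (fun j : Fin (N+1) =>
        if j = Fin.last N then (N : ℂ) / 2 else (j : ℕ) + 1 / 2) := by
  rw [Qmat_mul_self_add_Pmat_mul_self, creationMat_mul_conjTranspose,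
    conjTranspose_creationMat_mul, diagonal_add, ← diagonal_smul]
  congr 1
  funext j
  by_cases h : j = Fin.last N
  · simp only [Pi.smul_apply, smul_eq_mul, h, ↓reduceIte, Fin.val_last]
    ring
  · simp only [Pi.smul_apply, smul_eq_mul, h, ↓reduceIte]
    ring
end

section
/- For every natural number N, the characteristic polynomial of the scaled position matrix √2·Q_N equals the probabilist's Hermite polynomial He_{N+1} (with coefficients mapped into ℂ); consequently the eigenvalues of Q_N are exactly the numbers μ/√2 where μ ranges over the roots of He_{N+1}. -/
/-!
Expanding the determinant of a tridiagonal matrix along its last row gives the continuant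
recurrence `Dₙ₊₂ = dₙ₊₁ Dₙ₊₁ - lₙ uₙ Dₙ`. In the characteristic matrix of `√2 • Q_N` the diagonal
is `X` and the products of opposite off-diagonal entries are `(√(k+1))² = k + 1`, which is exactly
the recurrence `Heₙ₊₂ = X Heₙ₊₁ - (n+1) Heₙ` (a consequence of `He'ₙ₊₁ = (n+1) Heₙ`). The spectrum
of `Q_N` is then read off from that of `√2 • Q_N`.
-/

open Matrix Polynomial

namespace Matrix

variable {R : Type*} [CommRing R]

/-- Indexed through the values in `ℕ`, so that leading principal submatrices are again
`tridiagonal` (`tridiagonal_submatrix`). -/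
def tridiagonal (d l u : ℕ → R) (n : ℕ) : Matrix (Fin n) (Fin n) R :=
  of fun i j =>
    if (i : ℕ) = j then d i
    else if (i : ℕ) = j + 1 then l j
    else if (i : ℕ) + 1 = j then u i
    else 0

theorem tridiagonal_submatrix (d l u : ℕ → R) {m n : ℕ} {f g : Fin m → Fin n}
    (hf : ∀ i, (f i : ℕ) = i) (hg : ∀ j, (g j : ℕ) = j) :
    (tridiagonal d l u n).submatrix f g = tridiagonal d l u m := by
  ext i j
  simp only [tridiagonal, submatrix_apply, of_apply, hf, hg]

theorem tridiagonal_apply_eq_zero (d l u : ℕ → R) {n : ℕ} {i j : Fin n}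
    (h : (i : ℕ) + 1 < j ∨ (j : ℕ) + 1 < i) : tridiagonal d l u n i j = 0 := by
  simp only [tridiagonal, of_apply]
  split_ifs <;> first | omega | rfl

theorem det_tridiagonal_succ_succ (d l u : ℕ → R) (n : ℕ) :
    (tridiagonal d l u (n + 2)).det =
      d (n + 1) * (tridiagonal d l u (n + 1)).det - l n * u n * (tridiagonal d l u n).det := by
  have hminor : ((tridiagonal d l u (n + 2)).submatrix Fin.castSucc
      (Fin.last n).castSucc.succAbove).det = u n * (tridiagonal d l u n).det := by
    have hcols : ∀ c : Fin n, ((Fin.last n).castSucc.succAbove c.castSucc : ℕ) = c := fun c =>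
      congrArg Fin.val (Fin.succAbove_castSucc_of_lt _ _ (Fin.castSucc_lt_last c))
    rw [det_succ_column _ (Fin.last n), Fintype.sum_eq_single (Fin.last n)]
    · simp only [Fin.val_last, ← two_mul, pow_mul, neg_one_sq, one_pow, one_mul,
        submatrix_apply, Fin.succAbove_castSucc_self, Fin.succ_last, submatrix_submatrix,
        Fin.succAbove_last]
      rw [tridiagonal_submatrix d l u (n := n + 2) (f := Fin.castSucc ∘ Fin.castSucc)
        (g := (Fin.last n).castSucc.succAbove ∘ Fin.castSucc) (fun _ => rfl) hcols]
      congr 1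
      simp [tridiagonal]
      omega
    · intro i hi
      have hi : (i : ℕ) < n := Fin.val_lt_last hi
      rw [submatrix_apply, Fin.succAbove_castSucc_self, Fin.succ_last,
        tridiagonal_apply_eq_zero d l u (by simp; omega), mul_zero, zero_mul]
  rw [det_succ_row _ (Fin.last (n + 1)),
    Fintype.sum_eq_add (Fin.last (n + 1)) (Fin.last n).castSucc (Fin.castSucc_lt_last _).ne']
  · simp [Fin.succAbove_last, hminor, tridiagonal_submatrix d l u Fin.val_castSucc Fin.val_castSucc]
    simp [tridiagonal]
    ring
  · rintro j ⟨hj, hj'⟩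
    have hj : (j : ℕ) ≠ n + 1 := fun h => hj (Fin.ext h)
    have hj' : (j : ℕ) ≠ n := fun h => hj' (Fin.ext h)
    rw [tridiagonal_apply_eq_zero d l u (by simp; omega), mul_zero, zero_mul]

theorem charmatrix_tridiagonal (d l u : ℕ → R) (n : ℕ) :
    charmatrix (tridiagonal d l u n) =
      tridiagonal (fun i => X - C (d i)) (fun i => -C (l i)) (fun i => -C (u i)) n := by
  ext i j : 1
  by_cases h : i = j
  · subst h
    simp [tridiagonal]
  · have h' : (i : ℕ) ≠ j := Fin.val_ne_of_ne h
    simp only [charmatrix_apply_ne _ _ _ h, tridiagonal, of_apply, if_neg h']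
    split_ifs <;> simp

theorem mem_spectrum_iff_isRoot_charpoly_smul {K n : Type*} [Field K] [Fintype n]
    [DecidableEq n] (A : Matrix n n K) {c : K} (hc : c ≠ 0) (x : K) :
    x ∈ spectrum K A ↔ (c • A).charpoly.IsRoot (c * x) := by
  rw [← spectrum.smul_mem_smul_iff (r := Units.mk0 c hc), ← mem_spectrum_iff_isRoot_charpoly]
  rfl

end Matrix

namespace Polynomial

theorem derivative_hermite_succ (n : ℕ) :
    derivative (hermite (n + 1)) = (n + 1 : ℤ[X]) * hermite n := by
  induction n with
  | zero => simp
  | succ n ih =>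
    rw [hermite_succ (n + 1), derivative_sub, derivative_mul, ih, derivative_mul,
      hermite_succ n]
    simp only [derivative_X, derivative_add, derivative_natCast, derivative_one]
    push_cast
    ring

theorem hermite_succ_succ (n : ℕ) :
    hermite (n + 2) = X * hermite (n + 1) - (n + 1 : ℤ[X]) * hermite n := by
  rw [hermite_succ (n + 1), derivative_hermite_succ]

end Polynomial

open Matrix

theorem det_tridiagonal_eq_hermite {R : Type*} [CommRing R] (l u : ℕ → R[X])
    (hlu : ∀ k, l k * u k = k + 1) (n : ℕ) :
    (tridiagonal (fun _ => X) l u n).det = (hermite n).map (Int.castRingHom R) := by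
  induction n using Nat.twoStepInduction with
  | zero => simp
  | one => simp [tridiagonal]
  | more n ih₀ ih₁ =>
    rw [det_tridiagonal_succ_succ, ih₀, ih₁, hlu, hermite_succ_succ]
    simp

theorem sqrt_two_smul_Qmat_eq_tridiagonal (N : ℕ) :
    ((Real.sqrt 2 : ℂ)) • Qmat N =
      tridiagonal 0 (fun k => (Real.sqrt (k + 1) : ℂ)) (fun k => (Real.sqrt (k + 1) : ℂ))
        (N + 1) := by
  ext j k
  simp only [Matrix.smul_apply, Qmat, tridiagonal, of_apply]
  split_ifs <;> try omega
  · simp [field]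
  · rw [← ‹(j : ℕ) + 1 = k›]
    push_cast
    simp [field]
  all_goals simp

/-- the characteristic polynomial of `√2·Q_N` is the probabilist's Hermite
polynomial `He_{N+1}` (mapped into `ℂ`); consequently the eigenvalues of `Q_N` are exactly
the numbers `μ/√2` with `μ` a root of `He_{N+1}`. -/
theorem charpoly_sqrt_two_smul_Qmat (N : ℕ) :
    (((Real.sqrt 2 : ℂ)) • Qmat N).charpoly =
      (Polynomial.hermite (N + 1)).map (Int.castRingHom ℂ) ∧
    ∀ x : ℂ, x ∈ spectrum ℂ (Qmat N) ↔
      ∃ μ : ℂ, ((Polynomial.hermite (N + 1)).map (Int.castRingHom ℂ)).IsRoot μ ∧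
        x = μ / (Real.sqrt 2 : ℂ) := by
  have hcharpoly : (((Real.sqrt 2 : ℂ)) • Qmat N).charpoly =
      (hermite (N + 1)).map (Int.castRingHom ℂ) := by
    rw [Matrix.charpoly, sqrt_two_smul_Qmat_eq_tridiagonal, charmatrix_tridiagonal]
    simp only [Pi.zero_apply, map_zero, sub_zero]
    refine det_tridiagonal_eq_hermite _ _ (fun k => ?_) (N + 1)
    rw [neg_mul_neg, ← C_mul, ← Complex.ofReal_mul, Real.mul_self_sqrt (by positivity)]
    simp
  have h2 : (Real.sqrt 2 : ℂ) ≠ 0 := by exact_mod_cast (Real.sqrt_pos.2 two_pos).ne'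
  refine ⟨hcharpoly, fun x => ?_⟩
  rw [mem_spectrum_iff_isRoot_charpoly_smul _ h2, hcharpoly]
  refine ⟨fun h => ⟨_, h, by field_simp⟩, ?_⟩
  rintro ⟨μ, hμ, rfl⟩
  rwa [mul_div_cancel₀ _ h2]
end

section
/- For every natural number N, the characteristic polynomials of the momentum matrix P_N and the position matrix Q_N coincide; hence Q_N and P_N have identical spectra. -/
open Matrix Polynomial

namespace Matrix

variable {n K : Type*} [Fintype n] [DecidableEq n] [Field K]

theorem inv_diagonal_of_ne_zero {d : n → K} (hd : ∀ i, d i ≠ 0) :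
    (diagonal d)⁻¹ = diagonal fun i => (d i)⁻¹ := by
  refine inv_eq_right_inv ?_
  rw [diagonal_mul_diagonal, ← diagonal_one]
  exact congrArg diagonal (funext fun i => mul_inv_cancel₀ (hd i))

theorem charpoly_eq_and_spectrum_eq_of_apply_eq_mul_div {A B : Matrix n n K} {d : n → K}
    (hd : ∀ i, d i ≠ 0) (hB : ∀ i j, B i j = d i * A i j / d j) :
    B.charpoly = A.charpoly ∧ spectrum K B = spectrum K A := by
  have hu : IsUnit (diagonal d) := isUnit_diagonal.mpr (Pi.isUnit_iff.mpr fun i => (hd i).isUnit)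
  have hconj : B = hu.unit * A * (hu.unit : Matrix n n K)⁻¹ := by
    ext i j
    rw [IsUnit.unit_spec, inv_diagonal_of_ne_zero hd, mul_diagonal, diagonal_mul, hB,
      div_eq_mul_inv]
  rw [hconj]
  refine ⟨charpoly_units_conj _ _, ?_⟩
  rw [← coe_units_inv]
  exact spectrum.units_conjugate

end Matrix

/- Conjugation by `diag(d)` multiplies entry `(j, k)` by `d j / d k`; for `d j = i ^ j` this is `i`
on the subdiagonal of `Q_N` and `i⁻¹ = -i` on its superdiagonal, which turns `Q_N` into `P_N`. -/
theorem Pmat_apply_eq_I_pow_mul_Qmat_apply_div (N : ℕ) (j k : Fin (N + 1)) :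
    Pmat N j k = Complex.I ^ (j : ℕ) * Qmat N j k / Complex.I ^ (k : ℕ) := by
  simp only [Pmat, Qmat, of_apply]
  split_ifs with hjk hkj hkj
  · omega
  · rw [hjk, pow_succ]
    push_cast
    field_simp
    simp
  · rw [← hkj, pow_succ]
    push_cast
    field_simp
    simp [Complex.I_sq]
  · simp

/-- the characteristic polynomials of `P_N` and `Q_N` coincide,
hence the two matrices have identical spectra. -/
theorem charpoly_Pmat_eq_charpoly_Qmat (N : ℕ) :
    (Pmat N).charpoly = (Qmat N).charpoly ∧
    spectrum ℂ (Pmat N) = spectrum ℂ (Qmat N) :=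
  charpoly_eq_and_spectrum_eq_of_apply_eq_mul_div (fun _ => pow_ne_zero _ Complex.I_ne_zero)
    (Pmat_apply_eq_I_pow_mul_Qmat_apply_div N)
end

section
/- For every natural number n, the probabilist's Hermite polynomial He_n, regarded as a polynomial over ℝ, has exactly n distinct real roots; that is, He_n splits over ℝ and its root multiset has n distinct elements, each of multiplicity one. -/
/-!
Rolle's theorem, applied on the extended real line to a continuous function vanishing at
`±∞`, shows that its derivative has at least one more zero than the function itself.
The `n`-th derivative of the Gaussian `exp (-x²/2)` is `(-1)ⁿ Heₙ(x) exp (-x²/2)`, which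
vanishes at `±∞` and has the same zeros as `Heₙ`; by induction `Heₙ` has at least `n` distinct
real roots, hence, having degree `n`, exactly `n` simple ones.
-/

open Filter Topology Set Polynomial

section Rolle

variable {f : ℝ → ℝ}

lemma tendsto_comp_toReal_nhdsNE (hf : Continuous f) (hbot : Tendsto f atBot (𝓝 0))
    (htop : Tendsto f atTop (𝓝 0)) {a : EReal} (ha : ∀ x : ℝ, a = x → f x = 0) :
    Tendsto (fun y : EReal => f y.toReal) (𝓝[≠] a) (𝓝 0) := by
  induction a using EReal.rec with
  | bot => exact hbot.comp EReal.tendsto_toReal_atBot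
  | coe x =>
    rw [← ha x rfl]
    exact (hf.continuousAt.comp (EReal.tendsto_toReal (by simp) (by simp))).mono_left
      nhdsWithin_le_nhds
  | top => exact htop.comp EReal.tendsto_toReal_atTop

lemma exists_deriv_eq_zero_of_tendsto_ereal (hf : Continuous f) {a b : EReal} (hab : a < b)
    (ha : Tendsto (fun y : EReal => f y.toReal) (𝓝[≠] a) (𝓝 0))
    (hb : Tendsto (fun y : EReal => f y.toReal) (𝓝[≠] b) (𝓝 0)) :
    ∃ c : ℝ, a < c ∧ (c : EReal) < b ∧ deriv f c = 0 := by
  have hcont : ContinuousOn (fun y : EReal => f y.toReal) (Ioo a b) := fun y hy =>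
    (hf.continuousAt.comp (EReal.tendsto_toReal hy.2.ne_top hy.1.ne_bot)).continuousWithinAt
  obtain ⟨c, ⟨hac, hcb⟩, hc⟩ := exists_isLocalExtr_Ioo_of_tendsto hab hcont
    (ha.mono_left (nhdsWithin_mono _ fun _ h => ne_of_gt h))
    (hb.mono_left (nhdsWithin_mono _ fun _ h => ne_of_lt h))
  lift c to ℝ using ⟨hcb.ne_top, hac.ne_bot⟩
  exact ⟨c, hac, hcb, (hc.comp_continuous continuous_coe_real_ereal.continuousAt).deriv_eq_zero⟩

lemma card_add_one_le_card_of_deriv_eq_zero (hf : Continuous f) (hbot : Tendsto f atBot (𝓝 0))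
    (htop : Tendsto f atTop (𝓝 0)) {Z T : Finset ℝ} (hZ : ∀ x ∈ Z, f x = 0)
    (hT : ∀ x, deriv f x = 0 → x ∈ T) :
    Z.card + 1 ≤ T.card := by
  -- `⊥` and `⊤` serve as two extra zeros of `f`, so interleaving gives `#Z + 2 ≤ #T + 1`.
  set s : Finset EReal := insert ⊥ (insert ⊤ (Z.map ⟨(↑), EReal.coe_injective⟩))
  have hs : ∀ a ∈ s, ∀ x : ℝ, a = x → f x = 0 := by
    intro a ha x hax
    simp only [s, Finset.mem_insert, Finset.mem_map, Function.Embedding.coeFn_mk] at ha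
    rcases ha with rfl | rfl | ⟨y, hy, rfl⟩
    · simp at hax
    · simp at hax
    · exact EReal.coe_injective hax ▸ hZ y hy
  have hcard : s.card = Z.card + 2 := by
    rw [Finset.card_insert_of_notMem (by simp), Finset.card_insert_of_notMem (by simp),
      Finset.card_map]
  have := Finset.card_le_of_interleaved (s := s) (t := T.map ⟨(↑), EReal.coe_injective⟩)
    fun a ha b hb hab _ => by
      obtain ⟨c, hac, hcb, hc⟩ := exists_deriv_eq_zero_of_tendsto_ereal hf hab
        (tendsto_comp_toReal_nhdsNE hf hbot htop (hs a ha))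
        (tendsto_comp_toReal_nhdsNE hf hbot htop (hs b hb))
      exact ⟨c, Finset.mem_map_of_mem _ (hT c hc), hac, hcb⟩
  rw [hcard, Finset.card_map] at this
  omega

end Rolle

lemma tendsto_pow_mul_exp_neg_sq_div_two_cocompact (i : ℕ) :
    Tendsto (fun x : ℝ => x ^ i * Real.exp (-(x ^ 2 / 2))) (cocompact ℝ) (𝓝 0) := by
  refine tendsto_zero_iff_norm_tendsto_zero.2 <|
    (tendsto_rpow_abs_mul_exp_neg_mul_sq_cocompact one_half_pos i).congr fun x => ?_
  rw [Real.rpow_natCast, norm_mul, norm_pow, Real.norm_eq_abs,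
    Real.norm_of_nonneg (Real.exp_pos _).le]
  ring_nf

lemma Polynomial.tendsto_eval_mul_exp_neg_sq_div_two_cocompact (p : ℝ[X]) :
    Tendsto (fun x => p.eval x * Real.exp (-(x ^ 2 / 2))) (cocompact ℝ) (𝓝 0) := by
  have h := tendsto_finsetSum (Finset.range (p.natDegree + 1)) fun i _ =>
    (tendsto_pow_mul_exp_neg_sq_div_two_cocompact i).const_mul (p.coeff i)
  simp only [mul_zero, Finset.sum_const_zero] at h
  refine h.congr fun x => ?_
  rw [eval_eq_sum_range, Finset.sum_mul]
  simp only [mul_assoc]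

local notation "φ" => fun y : ℝ => Real.exp (-(y ^ 2 / 2))

lemma iterate_deriv_gaussian_eq (n : ℕ) :
    deriv^[n] φ = fun x =>
      (-1) ^ n * ((hermite n).map (Int.castRingHom ℝ)).eval x * Real.exp (-(x ^ 2 / 2)) := by
  ext x
  rw [deriv_gaussian_eq_hermite_mul_gaussian, ← algebraMap_int_eq, eval_map_algebraMap]

lemma iterate_deriv_gaussian_eq_zero_iff {n : ℕ} {x : ℝ} :
    deriv^[n] φ x = 0 ↔ ((hermite n).map (Int.castRingHom ℝ)).IsRoot x := by
  simp [iterate_deriv_gaussian_eq, Real.exp_ne_zero]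

lemma continuous_iterate_deriv_gaussian (n : ℕ) : Continuous (deriv^[n] φ) := by
  rw [iterate_deriv_gaussian_eq]
  fun_prop

lemma tendsto_iterate_deriv_gaussian_cocompact (n : ℕ) :
    Tendsto (deriv^[n] φ) (cocompact ℝ) (𝓝 0) := by
  simpa [iterate_deriv_gaussian_eq, mul_assoc] using
    ((hermite n).map (Int.castRingHom ℝ)).tendsto_eval_mul_exp_neg_sq_div_two_cocompact.const_mul
      ((-1 : ℝ) ^ n)

lemma le_card_roots_toFinset_hermite (n : ℕ) :
    n ≤ ((hermite n).map (Int.castRingHom ℝ)).roots.toFinset.card := by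
  induction n with
  | zero => exact Nat.zero_le _
  | succ n ih =>
    have hne : (hermite (n + 1)).map (Int.castRingHom ℝ) ≠ 0 := ((hermite_monic _).map _).ne_zero
    refine (Nat.succ_le_succ ih).trans <| card_add_one_le_card_of_deriv_eq_zero
      (continuous_iterate_deriv_gaussian n)
      ((tendsto_iterate_deriv_gaussian_cocompact n).mono_left atBot_le_cocompact)
      ((tendsto_iterate_deriv_gaussian_cocompact n).mono_left atTop_le_cocompact)
      (fun x hx => iterate_deriv_gaussian_eq_zero_iff.2
        (mem_roots'.1 (Multiset.mem_toFinset.1 hx)).2)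
      fun x hx => ?_
    rw [← Function.iterate_succ_apply' deriv, iterate_deriv_gaussian_eq_zero_iff] at hx
    exact Multiset.mem_toFinset.2 ((mem_roots hne).2 hx)

/-- the probabilist's Hermite polynomial `He_n`, viewed over `ℝ`, has exactly
`n` distinct real roots: it splits over `ℝ`, its root multiset has cardinality `n`, and the
roots are pairwise distinct (each of multiplicity one). -/
theorem hermite_n_distinct_real_roots (n : ℕ) :
    (((Polynomial.hermite n).map (Int.castRingHom ℝ)).Splits) ∧
    ((Polynomial.hermite n).map (Int.castRingHom ℝ)).roots.card = n ∧
    ((Polynomial.hermite n).map (Int.castRingHom ℝ)).roots.Nodup := by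
  set p := (hermite n).map (Int.castRingHom ℝ)
  have hdeg : p.natDegree = n := by
    rw [(hermite_monic n).natDegree_map, natDegree_hermite]
  have hle := le_card_roots_toFinset_hermite n
  have hcard : p.roots.card = n :=
    le_antisymm (hdeg ▸ p.card_roots') (hle.trans p.roots.toFinset_card_le)
  refine ⟨splits_iff_card_roots.2 (hcard.trans hdeg.symm), hcard, ?_⟩
  exact Multiset.toFinset_card_eq_card_iff_nodup.1
    (le_antisymm p.roots.toFinset_card_le (hcard ▸ hle))
end
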